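/- arXiv:2604.17791 — 2 statements merged into one kernel-verified Lean document; each statement's English description precedes it below -/
import Mathlib

section
/- Let θ = arccos(H/d) and θ̂ = arccos(H/d̂), where d = √(‖b − q‖² + H²), d̂ = √(‖b − q̂‖² + H²) and ‖q − q̂‖ ≤ r. Then |cos θ − cos θ̂| ≤ H·r/(d·d̂). -/
/-! With `d = √(‖b - q‖² + H²)` and `d̂ = √(‖b - q̂‖² + H²)` we have `cos θ - cos θ̂ = H (d̂ - d) / (d d̂)`.
The map `x ↦ √(x² + H²)` is the Euclidean norm of `(x, H)`, hence 1-Lipschitz, so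
`|d̂ - d| ≤ |‖b - q̂‖ - ‖b - q‖| ≤ ‖q - q̂‖ ≤ r`. -/

open Real

namespace Real

theorem abs_div_sqrt_sq_add_sq_le_one (a H : ℝ) : |H / √(a ^ 2 + H ^ 2)| ≤ 1 := by
  rw [abs_div, abs_of_nonneg (sqrt_nonneg _)]
  exact div_le_one_of_le₀ (abs_le_sqrt (by nlinarith)) (sqrt_nonneg _)

theorem cos_arccos_div_sqrt_sq_add_sq (a H : ℝ) :
    cos (arccos (H / √(a ^ 2 + H ^ 2))) = H / √(a ^ 2 + H ^ 2) :=
  have h := abs_le.mp (abs_div_sqrt_sq_add_sq_le_one a H)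
  cos_arccos h.1 h.2

/-- Cauchy–Schwarz for the vectors `(a, H)` and `(c, H)`. -/
theorem mul_add_sq_le_sqrt_sq_add_sq_mul_sqrt_sq_add_sq (a c H : ℝ) :
    a * c + H ^ 2 ≤ √(a ^ 2 + H ^ 2) * √(c ^ 2 + H ^ 2) := by
  rw [← sqrt_mul (by positivity)]
  exact (le_abs_self _).trans (abs_le_sqrt (by nlinarith [sq_nonneg (a * H - c * H)]))

theorem abs_sqrt_sq_add_sq_sub_sqrt_sq_add_sq_le (a c H : ℝ) :
    |√(a ^ 2 + H ^ 2) - √(c ^ 2 + H ^ 2)| ≤ |a - c| := by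
  rw [← sq_le_sq]
  have hCS := mul_add_sq_le_sqrt_sq_add_sq_mul_sqrt_sq_add_sq a c H
  have ha := sq_sqrt (show 0 ≤ a ^ 2 + H ^ 2 by positivity)
  have hc := sq_sqrt (show 0 ≤ c ^ 2 + H ^ 2 by positivity)
  nlinarith

end Real

theorem abs_div_sub_div_of_pos {H d e : ℝ} (hH : 0 ≤ H) (hd : 0 < d) (he : 0 < e) :
    |H / d - H / e| = H * |e - d| / (d * e) := by
  rw [div_sub_div _ _ hd.ne' he.ne', abs_div, abs_of_pos (mul_pos hd he), mul_comm d H, ← mul_sub,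
    abs_mul, abs_of_nonneg hH]

theorem aoa_cosine_error_bound (b q qhat : EuclideanSpace ℝ (Fin 2)) (H r : ℝ)
    (hH : 0 < H) (hq : ‖q - qhat‖ ≤ r) :
    |Real.cos (Real.arccos (H / Real.sqrt (‖b - q‖^2 + H^2))) -
      Real.cos (Real.arccos (H / Real.sqrt (‖b - qhat‖^2 + H^2)))| ≤
      H * r /
        (Real.sqrt (‖b - q‖^2 + H^2) * Real.sqrt (‖b - qhat‖^2 + H^2)) := by
  have hd : 0 < √(‖b - q‖ ^ 2 + H ^ 2) := sqrt_pos.2 (by positivity)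
  have hd' : 0 < √(‖b - qhat‖ ^ 2 + H ^ 2) := sqrt_pos.2 (by positivity)
  have hdist : |‖b - qhat‖ - ‖b - q‖| ≤ ‖q - qhat‖ := by
    rw [abs_sub_comm]
    simpa only [← dist_eq_norm, dist_comm b] using abs_dist_sub_le q qhat b
  rw [cos_arccos_div_sqrt_sq_add_sq, cos_arccos_div_sqrt_sq_add_sq,
    abs_div_sub_div_of_pos hH.le hd hd']
  gcongr
  exact (abs_sqrt_sq_add_sq_sub_sqrt_sq_add_sq_le _ _ H).trans (hdist.trans hq)
end

section
/- Under the assumptions ‖q − q̂‖ ≤ r, d = √(‖b − q‖² + H²), d̂ = √(‖b − q̂‖² + H²), antenna positions in [0, L], wavelength λ > 0, and channels h = (√g₀/d)·a(θ), ĥ = (√g₀/d̂)·a(θ̂) with cos θ = H/d, cos θ̂ = H/d̂, the channel estimation error satisfies ‖h − ĥ‖ ≤ (√(M·g₀)·r/(d·d̂))·(1 + 2πLH/(λ·d̂)). -/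
/-!
Both the path gain `√g₀ / d` and the phase `(2π/λ) x cos θ` depend on the position only through
the distance `d`, which is `1`-Lipschitz in the horizontal position. Splitting
`h - ĥ = (√g₀/d - √g₀/d̂) a(θ) + (√g₀/d̂) (a(θ) - a(θ̂))`, the first term is controlled by
`‖a(θ)‖ = √M` and `|1/d - 1/d̂| ≤ r/(d d̂)`, the second by `|e^{is} - e^{it}| ≤ |s - t|` applied
entrywise together with `|cos θ - cos θ̂| = H |1/d - 1/d̂|`.
-/

open Complex

theorem norm_exp_I_mul_ofReal_sub_exp_I_mul_ofReal_le (s t : ℝ) :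
    ‖exp (I * s) - exp (I * t)‖ ≤ |s - t| := by
  have hfactor : exp (I * s) - exp (I * t) = exp (I * t) * (exp (I * ↑(s - t)) - 1) := by
    rw [mul_sub, mul_one, ← Complex.exp_add]
    push_cast
    ring_nf
  rw [hfactor, norm_mul, norm_exp_I_mul_ofReal, one_mul]
  exact Real.norm_exp_I_mul_ofReal_sub_one_le

theorem norm_smul_sub_smul_le {𝕜 E : Type*} [SeminormedRing 𝕜] [SeminormedAddCommGroup E]
    [Module 𝕜 E] [IsBoundedSMul 𝕜 E] (α β : 𝕜) (u v : E) :
    ‖α • u - β • v‖ ≤ ‖α - β‖ * ‖u‖ + ‖β‖ * ‖u - v‖ :=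
  calc ‖α • u - β • v‖ = ‖(α - β) • u + β • (u - v)‖ := by
        rw [sub_smul, smul_sub, sub_add_sub_cancel]
    _ ≤ ‖α - β‖ * ‖u‖ + ‖β‖ * ‖u - v‖ :=
        (norm_add_le _ _).trans (add_le_add (norm_smul_le _ _) (norm_smul_le _ _))

theorem EuclideanSpace.norm_le_sqrt_card_mul {𝕜 ι : Type*} [RCLike 𝕜] [Fintype ι]
    {v : EuclideanSpace 𝕜 ι} {c : ℝ} (h : ∀ i, ‖v i‖ ≤ c) :
    ‖v‖ ≤ √(Fintype.card ι) * c := by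
  cases isEmpty_or_nonempty ι
  · simp [Subsingleton.elim v 0]
  have hc : 0 ≤ c := (norm_nonneg _).trans (h (Classical.arbitrary ι))
  rw [EuclideanSpace.norm_eq, ← Real.sqrt_sq hc, ← Real.sqrt_mul (Nat.cast_nonneg _)]
  gcongr
  calc ∑ i, ‖v i‖ ^ 2 ≤ ∑ _i : ι, c ^ 2 := by gcongr with i; exact h i
    _ = Fintype.card ι * c ^ 2 := by simp

theorem abs_sqrt_norm_sq_add_sq_sub_le {E : Type*} [SeminormedAddCommGroup E] (u v : E) (c : ℝ) :
    |√(‖u‖ ^ 2 + c ^ 2) - √(‖v‖ ^ 2 + c ^ 2)| ≤ ‖u - v‖ := by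
  -- `√(a² + c²) = |a + c i|`, so this is the reverse triangle inequality in `ℂ`.
  simp only [← Complex.norm_add_mul_I]
  refine (abs_norm_sub_norm_le _ _).trans ?_
  rw [add_sub_add_right_eq_sub, ← ofReal_sub, norm_real, Real.norm_eq_abs]
  exact abs_norm_sub_norm_le u v

theorem abs_div_sub_div_le {a x y r : ℝ} (ha : 0 ≤ a) (hx : 0 < x) (hy : 0 < y)
    (h : |x - y| ≤ r) : |a / x - a / y| ≤ a * r / (x * y) := by
  rw [show a / x - a / y = a * (y - x) / (x * y) by field_simp, abs_div, abs_mul, abs_of_nonneg ha,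
    abs_of_pos (mul_pos hx hy), abs_sub_comm]
  gcongr

section SteeringVector

variable {ι : Type*} (lam : ℝ) (x : ι → ℝ)

noncomputable def steeringVector (θ : ℝ) : EuclideanSpace ℂ ι :=
  WithLp.toLp 2 fun m => exp (I * (2 * Real.pi / lam) * x m * Real.cos θ)

theorem steeringVector_apply (θ : ℝ) (m : ι) :
    steeringVector lam x θ m = exp (I * ↑(2 * Real.pi / lam * x m * Real.cos θ)) := by
  simp only [steeringVector, PiLp.toLp_apply]
  push_cast
  ring_nf

theorem norm_steeringVector [Fintype ι] (θ : ℝ) : ‖steeringVector lam x θ‖ = √(Fintype.card ι) := by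
  rw [EuclideanSpace.norm_eq]
  simp only [steeringVector_apply, norm_exp_I_mul_ofReal]
  simp

variable {lam x}

theorem norm_steeringVector_sub_le [Fintype ι] {L c θ θ' : ℝ} (hlam : 0 < lam) (hx : ∀ m, x m ∈ Set.Icc 0 L)
    (hc : |Real.cos θ - Real.cos θ'| ≤ c) :
    ‖steeringVector lam x θ - steeringVector lam x θ'‖ ≤
      √(Fintype.card ι) * (2 * Real.pi / lam * L * c) := by
  refine EuclideanSpace.norm_le_sqrt_card_mul fun m => ?_
  obtain ⟨hx₀, hxL⟩ := hx m
  rw [PiLp.sub_apply, steeringVector_apply, steeringVector_apply]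
  refine (norm_exp_I_mul_ofReal_sub_exp_I_mul_ofReal_le _ _).trans ?_
  rw [← mul_sub, abs_mul, abs_of_nonneg (by positivity)]
  have : 0 ≤ L := hx₀.trans hxL
  gcongr

end SteeringVector

theorem channel_estimation_error_bound_general (M : ℕ)
    (b q qhat : EuclideanSpace ℝ (Fin 2)) (H r g₀ L lam : ℝ)
    (hH : 0 < H) (hlam : 0 < lam)
    (hq : ‖q - qhat‖ ≤ r)
    (x : Fin M → ℝ) (hx : ∀ m, x m ∈ Set.Icc 0 L)
    (d dhat : ℝ)
    (hd : d = Real.sqrt (‖b - q‖^2 + H^2))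
    (hdhat : dhat = Real.sqrt (‖b - qhat‖^2 + H^2))
    (θ θhat : ℝ) (hθ : Real.cos θ = H / d) (hθhat : Real.cos θhat = H / dhat)
    (h hhat : EuclideanSpace ℂ (Fin M))
    (hh : h = ((Real.sqrt g₀ / d : ℝ) : ℂ) •
      (WithLp.toLp 2 (fun m => Complex.exp (Complex.I * (2 * Real.pi / lam) * (x m) * Real.cos θ))
        : EuclideanSpace ℂ (Fin M)))
    (hhhat : hhat = ((Real.sqrt g₀ / dhat : ℝ) : ℂ) •
      (WithLp.toLp 2 (fun m => Complex.exp (Complex.I * (2 * Real.pi / lam) * (x m) * Real.cos θhat))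
        : EuclideanSpace ℂ (Fin M))) :
    ‖h - hhat‖ ≤ (Real.sqrt (M * g₀) * r / (d * dhat)) *
      (1 + 2 * Real.pi * L * H / (lam * dhat)) := by
  have hdpos : 0 < d := hd ▸ Real.sqrt_pos.2 (by positivity)
  have hdhatpos : 0 < dhat := hdhat ▸ Real.sqrt_pos.2 (by positivity)
  have hdist : |d - dhat| ≤ r := by
    rw [hd, hdhat]
    refine (abs_sqrt_norm_sq_add_sq_sub_le _ _ H).trans ?_
    rwa [sub_sub_sub_cancel_left, norm_sub_rev]
  have hcos : |Real.cos θ - Real.cos θhat| ≤ H * r / (d * dhat) := by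
    rw [hθ, hθhat]
    exact abs_div_sub_div_le hH.le hdpos hdhatpos hdist
  have hgain : ‖((√g₀ / d : ℝ) : ℂ) - ((√g₀ / dhat : ℝ) : ℂ)‖ ≤ √g₀ * r / (d * dhat) := by
    rw [← ofReal_sub, norm_real, Real.norm_eq_abs]
    exact abs_div_sub_div_le (Real.sqrt_nonneg _) hdpos hdhatpos hdist
  change h = _ • steeringVector lam x θ at hh
  change hhat = _ • steeringVector lam x θhat at hhhat
  rw [hh, hhhat]
  calc _ ≤ _ := norm_smul_sub_smul_le _ _ _ _
    _ ≤ √g₀ * r / (d * dhat) * √M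
        + √g₀ / dhat * (√M * (2 * Real.pi / lam * L * (H * r / (d * dhat)))) := by
      rw [norm_steeringVector, norm_real, Real.norm_of_nonneg (by positivity), Fintype.card_fin]
      gcongr
      simpa only [Fintype.card_fin] using norm_steeringVector_sub_le hlam hx hcos
    _ = _ := by
      rw [Real.sqrt_mul (Nat.cast_nonneg M)]
      field_simp

theorem channel_estimation_error_bound (M : ℕ)
    (b q qhat : EuclideanSpace ℝ (Fin 2)) (H r g₀ L lam : ℝ)
    (hH : 0 < H) (hg₀ : 0 < g₀) (hlam : 0 < lam)
    (hq : ‖q - qhat‖ ≤ r)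
    (x : Fin M → ℝ) (hx : ∀ m, x m ∈ Set.Icc 0 L)
    (d dhat : ℝ)
    (hd : d = Real.sqrt (‖b - q‖^2 + H^2))
    (hdhat : dhat = Real.sqrt (‖b - qhat‖^2 + H^2))
    (θ θhat : ℝ) (hθ : Real.cos θ = H / d) (hθhat : Real.cos θhat = H / dhat)
    (h hhat : EuclideanSpace ℂ (Fin M))
    (hh : h = ((Real.sqrt g₀ / d : ℝ) : ℂ) •
      (WithLp.toLp 2 (fun m => Complex.exp (Complex.I * (2 * Real.pi / lam) * (x m) * Real.cos θ))
        : EuclideanSpace ℂ (Fin M)))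
    (hhhat : hhat = ((Real.sqrt g₀ / dhat : ℝ) : ℂ) •
      (WithLp.toLp 2 (fun m => Complex.exp (Complex.I * (2 * Real.pi / lam) * (x m) * Real.cos θhat))
        : EuclideanSpace ℂ (Fin M))) :
    ‖h - hhat‖ ≤ (Real.sqrt (M * g₀) * r / (d * dhat)) *
      (1 + 2 * Real.pi * L * H / (lam * dhat)) :=
  channel_estimation_error_bound_general M b q qhat H r g₀ L lam hH hlam hq x hx d dhat hd hdhat θ
    θhat hθ hθhat h hhat hh hhhat
end
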